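/- No self-counterargument: an argument ⟨A : h⟩ based on an argumentative theory Γ never counter-argues itself; in particular there is no subargument ⟨A' : s⟩ of ⟨A : h⟩ such that Π(Γ) ∪ {h, s} is contradictory. -/
import Mathlib


/-- Literals: atoms or their strong negations (`~p` treated as a fresh atom). -/
inductive Lit : Type
  | pos : ℕ → Lit
  | neg : ℕ → Lit
deriving DecidableEq

/-- Wffs of the propositional Horn-like language: literals (facts)
and rules `β ← α1,...,αk` with literal head and body. -/
inductive Wff : Type
  | lit : Lit → Wff
  | rule : Lit → List Lit → Wff
deriving DecidableEq

/-- SLD derivability: facts in `P` are derivable; if a rule of `P`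
has all its body literals derivable, its head is derivable. -/
inductive Sld (P : Set Wff) : Lit → Prop
  | fact {h : Lit} : Wff.lit h ∈ P → Sld P h
  | mp {h : Lit} {body : List Lit} : Wff.rule h body ∈ P →
      (∀ a ∈ body, Sld P a) → Sld P h

/-- A set of wffs is contradictory iff complementary literals `p` and `~p`
are both SLD-derivable from it. -/
def Contra (S : Set Wff) : Prop := ∃ n, Sld S (.pos n) ∧ Sld S (.neg n)

/-- The non-defeasible (strict) part Π(Γ) of a labeled theory. -/
def PiSet (Γ : Set (Set Wff × Wff)) : Set Wff := {f | (∅, f) ∈ Γ}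

/-- The defeasible wffs of Γ: those α with ⟨{α} : α⟩ ∈ Γ. -/
def Defeasibles (Γ : Set (Set Wff × Wff)) : Set Wff := {f | ({f}, f) ∈ Γ}

/-- All (defeasible and non-defeasible) wffs of Γ. -/
def AllWffs (Γ : Set (Set Wff × Wff)) : Set Wff := PiSet Γ ∪ Defeasibles Γ

/-- An argumentative theory: a finite set of basic declarative units
⟨∅ : α⟩ or ⟨{α} : α⟩ whose strict part is non-contradictory. -/
def IsArgTheory (Γ : Set (Set Wff × Wff)) : Prop :=
  Γ.Finite ∧ (∀ p ∈ Γ, p.1 = ∅ ∨ p.1 = {p.2}) ∧ ¬Contra (PiSet Γ)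

/-- Conclusions of the labeled consequence relation: wffs or conjunctions of literals. -/
inductive Concl : Type
  | wff : Wff → Concl
  | conj : List Lit → Concl

/-- The argumentative consequence relation ⊢_Arg, generated by
Intro-NR, Intro-RE, Intro-∧ and Elim-← (each with its consistency side condition). -/
inductive ArgDeriv (Γ : Set (Set Wff × Wff)) : Set Wff → Concl → Prop
  | introNR {f : Wff} : (∅, f) ∈ Γ → ArgDeriv Γ ∅ (.wff f)
  | introRE {Φ : Set Wff} {f : Wff} : (Φ, f) ∈ Γ → ¬Contra (PiSet Γ ∪ Φ) →
      ArgDeriv Γ Φ (.wff f)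
  | introAnd {L : List (Set Wff × Lit)} :
      (∀ p ∈ L, ArgDeriv Γ p.1 (.wff (.lit p.2))) →
      ¬Contra (PiSet Γ ∪ ⋃ p ∈ L, p.1) →
      ArgDeriv Γ (⋃ p ∈ L, p.1) (.conj (L.map Prod.snd))
  | elim {Φ₁ Φ₂ : Set Wff} {h : Lit} {body : List Lit} :
      ArgDeriv Γ Φ₁ (.wff (.rule h body)) →
      ArgDeriv Γ Φ₂ (.conj body) →
      ¬Contra (PiSet Γ ∪ Φ₁ ∪ Φ₂) →
      ArgDeriv Γ (Φ₁ ∪ Φ₂) (.wff (.lit h))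

lemma sld_mono {P Q : Set Wff} (hPQ : P ⊆ Q) {l : Lit} (h : Sld P l) : Sld Q l := by
  induction h with
  | fact hf => exact .fact (hPQ hf)
  | mp hr _ ih => exact .mp (hPQ hr) ih

lemma sld_cut {P Q : Set Wff} {h s : Lit} (hPQ : P ⊆ Q)
    (hh : Sld Q h) (hs : Sld Q s) {t : Lit}
    (ht : Sld (P ∪ {Wff.lit h, Wff.lit s}) t) : Sld Q t := by
  induction ht with
  | fact hf =>
    rcases hf with hf | hf | hf
    · exact .fact (hPQ hf)
    · simp only [Wff.lit.injEq] at hf; subst hf; exact hh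
    · simp only [Set.mem_singleton_iff, Wff.lit.injEq] at hf; subst hf; exact hs
  | mp hr _ ih =>
    rcases hr with hr | hr | hr
    · exact .mp (hPQ hr) ih
    · simp at hr
    · simp at hr

lemma arg_sound {Γ : Set (Set Wff × Wff)} (hΓ : IsArgTheory Γ)
    {A : Set Wff} {c : Concl} (hd : ArgDeriv Γ A c) :
    ¬Contra (PiSet Γ ∪ A) ∧
    (∀ l, c = .wff (.lit l) → Sld (PiSet Γ ∪ A) l) ∧
    (∀ hh b, c = .wff (.rule hh b) → Wff.rule hh b ∈ PiSet Γ ∪ A) ∧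
    (∀ L, c = .conj L → ∀ l ∈ L, Sld (PiSet Γ ∪ A) l) := by
  induction hd with
  | @introNR f hf =>
    have hfP : f ∈ PiSet Γ ∪ (∅ : Set Wff) := Or.inl hf
    refine ⟨by simpa using hΓ.2.2, ?_, ?_, ?_⟩
    · rintro l hl; cases hl; exact .fact hfP
    · rintro hh b hb; cases hb; exact hfP
    · rintro L hL; cases hL
  | @introRE Φ f hf hnc =>
    have hfP : f ∈ PiSet Γ ∪ Φ := by
      rcases hΓ.2.1 _ hf with h0 | h1
      · exact Or.inl (by simpa [PiSet, ← h0] using hf)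
      · simp only [] at h1; exact Or.inr (by rw [show Φ = {f} from h1]; rfl)
    refine ⟨hnc, ?_, ?_, ?_⟩
    · rintro l hl; cases hl; exact .fact hfP
    · rintro hh b hb; cases hb; exact hfP
    · rintro L hL; cases hL
  | @introAnd L hL hnc ih =>
    refine ⟨hnc, ?_, ?_, ?_⟩
    · rintro l hl; cases hl
    · rintro hh b hb; cases hb
    · rintro M hM l hl
      cases hM
      simp only [List.mem_map] at hl
      obtain ⟨p, hp, rfl⟩ := hl
      have := (ih p hp).2.1 p.2 rfl
      refine sld_mono ?_ this
      intro x hx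
      rcases hx with hx | hx
      · exact Or.inl hx
      · exact Or.inr (Set.mem_biUnion hp hx)
  | @elim Φ₁ Φ₂ hh body h1 h2 hnc ih1 ih2 =>
    refine ⟨by rw [← Set.union_assoc]; exact hnc, ?_, ?_, ?_⟩
    · rintro l hl; cases hl
      have hr := ih1.2.2.1 hh body rfl
      have hb := ih2.2.2.2 body rfl
      have hsub1 : PiSet Γ ∪ Φ₁ ⊆ PiSet Γ ∪ (Φ₁ ∪ Φ₂) := by
        intro x hx; rcases hx with hx | hx
        · exact Or.inl hx
        · exact Or.inr (Or.inl hx)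
      have hsub2 : PiSet Γ ∪ Φ₂ ⊆ PiSet Γ ∪ (Φ₁ ∪ Φ₂) := by
        intro x hx; rcases hx with hx | hx
        · exact Or.inl hx
        · exact Or.inr (Or.inr hx)
      exact .mp (hsub1 hr) (fun a ha => sld_mono hsub2 (hb a ha))
    · rintro h' b hb; cases hb
    · rintro M hM; cases hM

/-- no self-counterargument: an argument ⟨A : h⟩ never counter-argues
itself; there is no subargument ⟨A' : s⟩ of it with Π(Γ) ∪ {h, s} contradictory. -/
theorem no_self_counterargument (Γ : Set (Set Wff × Wff)) (hΓ : IsArgTheory Γ)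
    (A : Set Wff) (h : Lit) (hd : ArgDeriv Γ A (.wff (.lit h)))
    (A' : Set Wff) (s : Lit) (hsub : A' ⊆ A) (hs : Sld (PiSet Γ ∪ A') s) :
    ¬Contra (PiSet Γ ∪ {Wff.lit h, Wff.lit s}) := by
  obtain ⟨hnc, hlit, -, -⟩ := arg_sound hΓ hd
  have hhd : Sld (PiSet Γ ∪ A) h := hlit h rfl
  have hsd : Sld (PiSet Γ ∪ A) s :=
    sld_mono (Set.union_subset_union_right _ hsub) hs
  rintro ⟨n, hp, hn⟩
  have hPQ : PiSet Γ ⊆ PiSet Γ ∪ A := Set.subset_union_left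
  have hP : (PiSet Γ ∪ {Wff.lit h, Wff.lit s}) = (PiSet Γ ∪ {Wff.lit h, Wff.lit s}) := rfl
  exact hnc ⟨n, sld_cut hPQ hhd hsd hp, sld_cut hPQ hhd hsd hn⟩
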